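/- Let H be a 3-dimensional complex inner product space with orthonormal basis {e₀, e₁, e₂}. Define unit vectors e₊ = (e₀+e₁)/√2, e₋ = (e₀−e₁)/√2, e₊ᵢ = (e₀+i·e₁)/√2, e₋ᵢ = (e₀−i·e₁)/√2, and define the four orthogonal projections Q₁ = proj(e₁) + proj(e₂), Q₂ = proj(e₀) + proj(e₂), Q₃ = proj(e₋) + proj(e₂), Q₄ = proj(e₋ᵢ) + proj(e₂), where proj(v) denotes the orthogonal projection onto the span of v. If B is a rank-one linear operator on H (i.e., B(x) = ⟨w, x⟩·v for some vectors v, w ∈ H) with Tr(Q_i ∘ B) = 0 for all i ∈ {1,2,3,4}, then also Tr(proj(e₀) ∘ B) = 0. -/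

import Mathlib

/-- The orthogonal projection onto the span of `v`, as a linear operator on `E`. -/
noncomputable def projSpan {E : Type*} [NormedAddCommGroup E] [InnerProductSpace ℂ E]
    [FiniteDimensional ℂ E] (v : E) : E →ₗ[ℂ] E :=
  (ℂ ∙ v).subtype ∘ₗ ((ℂ ∙ v).orthogonalProjection).toLinearMap

/-- The rank-one operator `x ↦ ⟪w, x⟫ • v`, representing the separable two-state
vector `|v⟩⊗⟨w|`. -/
noncomputable def rankOne {E : Type*} [NormedAddCommGroup E] [InnerProductSpace ℂ E]
    (v w : E) : E →ₗ[ℂ] E where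
  toFun x := (inner ℂ w x : ℂ) • v
  map_add' x y := by simp [inner_add_right, add_smul]
  map_smul' c x := by simp [inner_smul_right, smul_smul]

open scoped InnerProductSpace

lemma trace_inner' {E : Type*} [NormedAddCommGroup E] [InnerProductSpace ℂ E]
    (e : OrthonormalBasis (Fin 3) ℂ E) (T : E →ₗ[ℂ] E) :
    LinearMap.trace ℂ E T = ∑ i, ⟪e i, T (e i)⟫_ℂ := by
  rw [LinearMap.trace_eq_matrix_trace ℂ e.toBasis, Matrix.trace]
  simp [Matrix.diag, LinearMap.toMatrix_apply, OrthonormalBasis.coe_toBasis_repr_apply,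
    OrthonormalBasis.repr_apply_apply]

lemma projSpan_apply' {E : Type*} [NormedAddCommGroup E] [InnerProductSpace ℂ E]
    [FiniteDimensional ℂ E] (u x : E) :
    projSpan u x = (⟪u, x⟫_ℂ / ⟪u, u⟫_ℂ) • u := by
  simp [projSpan, ← Submodule.starProjection_apply, Submodule.starProjection_singleton,
    inner_self_eq_norm_sq_to_K]

lemma trace_key' {E : Type*} [NormedAddCommGroup E] [InnerProductSpace ℂ E]
    [FiniteDimensional ℂ E] (e : OrthonormalBasis (Fin 3) ℂ E) (u v w : E) :
    LinearMap.trace ℂ E (projSpan u ∘ₗ rankOne v w)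
      = ⟪u, v⟫_ℂ * ⟪w, u⟫_ℂ / ⟪u, u⟫_ℂ := by
  rw [trace_inner' e]
  have : ∀ i : Fin 3, ⟪e i, (projSpan u ∘ₗ rankOne v w) (e i)⟫_ℂ
      = (⟪u, v⟫_ℂ / ⟪u, u⟫_ℂ) * (⟪w, e i⟫_ℂ * ⟪e i, u⟫_ℂ) := by
    intro i
    simp [rankOne, projSpan_apply', inner_smul_left, inner_smul_right]
    ring
  simp_rw [this, ← Finset.mul_sum, e.sum_inner_mul_inner]
  ring

/-- No separable two-state vector (rank-one operator) on a 3-dimensional space can have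
vanishing trace against the four projections `Q₁ = proj(e₁)+proj(e₂)`,
`Q₂ = proj(e₀)+proj(e₂)`, `Q₃ = proj(e₋)+proj(e₂)`, `Q₄ = proj(e₋ᵢ)+proj(e₂)` while
having nonzero trace against `proj(e₀)`. -/
theorem stmt15 {E : Type*} [NormedAddCommGroup E] [InnerProductSpace ℂ E]
    [FiniteDimensional ℂ E] (hdim : Module.finrank ℂ E = 3)
    (e : OrthonormalBasis (Fin 3) ℂ E) (v w : E) (B : E →ₗ[ℂ] E)
    (hB : B = rankOne v w)
    (h1 : LinearMap.trace ℂ E ((projSpan (e 1) + projSpan (e 2)) ∘ₗ B) = 0)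
    (h2 : LinearMap.trace ℂ E ((projSpan (e 0) + projSpan (e 2)) ∘ₗ B) = 0)
    (h3 : LinearMap.trace ℂ E
        ((projSpan ((Real.sqrt 2 : ℂ)⁻¹ • (e 0 - e 1)) + projSpan (e 2)) ∘ₗ B) = 0)
    (h4 : LinearMap.trace ℂ E
        ((projSpan ((Real.sqrt 2 : ℂ)⁻¹ • (e 0 - Complex.I • e 1)) + projSpan (e 2))
          ∘ₗ B) = 0) :
    LinearMap.trace ℂ E (projSpan (e 0) ∘ₗ B) = 0 := by
  subst hB
  simp only [LinearMap.add_comp, map_add, trace_key' e] at h1 h2 h3 h4 ⊢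
  have hij : ∀ i j : Fin 3, ⟪e i, e j⟫_ℂ = if i = j then 1 else 0 :=
    orthonormal_iff_ite.mp e.orthonormal
  simp only [inner_sub_left, inner_sub_right, inner_smul_left, inner_smul_right,
    map_inv₀, Complex.conj_ofReal, Complex.conj_I, hij] at h1 h2 h3 h4 ⊢
  norm_num at h1 h2 h3 h4
  field_simp at h3 h4
  set a0 := ⟪e 0, v⟫_ℂ with ha0; set a1 := ⟪e 1, v⟫_ℂ with ha1; set a2 := ⟪e 2, v⟫_ℂ with ha2
  set b0 := ⟪w, e 0⟫_ℂ with hb0; set b1 := ⟪w, e 1⟫_ℂ with hb1; set b2 := ⟪w, e 2⟫_ℂ with hb2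
  have hp : a0 * b1 = 0 := by
    linear_combination (-(1:ℂ)/2) * h3 + (Complex.I/2) * h4
      + ((1:ℂ)/2 - Complex.I/2) * h1 + ((1:ℂ)/2 - Complex.I/2) * h2
      + (a0 * b1 / 2 + a1 * b1 * Complex.I / 2 - a1 * b0 / 2 + Complex.I * a2 * b2 / 2) * Complex.I_sq
  have hx : (a0 * b0) ^ 2 = 0 := by
    linear_combination (a1 * b0) * hp + (a0 * b0) * h2 - (a0 * b0) * h1
  have h := pow_eq_zero_iff (n := 2) (by norm_num) |>.mp hx
  rcases mul_eq_zero.mp h with h | h <;> simp [h]
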